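/- arXiv:1703.02919 — 2 statements merged into one kernel-verified Lean document; each statement's English description precedes it below -/
import Mathlib

section
/- Let K be a locally compact Hausdorff topological space admitting a nonzero atomless regular finite Borel measure. Then there exists a finite convex combination of slices of the closed unit ball of C₀(K) (in fact, a half-sum of two slices) whose interior in the relative weak topology of the closed unit ball is empty. -/
open scoped Pointwise

noncomputable section

/-- The slice `S(f, α)` of the closed unit ball of `Z`. -/
def ballSlice (Z : Type*) [NormedAddCommGroup Z] [NormedSpace ℝ Z]
    (f : StrongDual ℝ Z) (α : ℝ) : Set Z :=
  {z ∈ Metric.closedBall (0 : Z) 1 | 1 - α < f z}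

/-- `C` is a finite convex combination of slices of the closed unit ball of `Z`. -/
def IsCCS (Z : Type*) [NormedAddCommGroup Z] [NormedSpace ℝ Z] (C : Set Z) : Prop :=
  ∃ (n : ℕ) (f : Fin n → StrongDual ℝ Z) (α lam : Fin n → ℝ),
    0 < n ∧ (∀ i, ‖f i‖ = 1) ∧ (∀ i, 0 < α i) ∧ (∀ i, 0 ≤ lam i) ∧
    (∑ i, lam i) = 1 ∧ C = ∑ i, lam i • ballSlice Z (f i) (α i)

/-- `z` is an interior point of `C` in the relative weak topology of the closed
unit ball of `Z`: some basic weak neighbourhood of `z`, intersected with the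
closed unit ball, is contained in `C`. -/
def RelWeakInteriorPt (Z : Type*) [NormedAddCommGroup Z] [NormedSpace ℝ Z]
    (C : Set Z) (z : Z) : Prop :=
  ∃ (F : Finset (StrongDual ℝ Z)) (δ : ℝ), 0 < δ ∧
    {w ∈ Metric.closedBall (0 : Z) 1 | ∀ f ∈ F, |f w - f z| < δ} ⊆ C


/-- `C` is relatively weakly open in the closed unit ball of `Z`. -/
def RelWeaklyOpen (Z : Type*) [NormedAddCommGroup Z] [NormedSpace ℝ Z] (C : Set Z) : Prop :=
  ∀ z ∈ C, RelWeakInteriorPt Z C z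

/-- (P1): every finite convex combination of slices of the closed unit ball of `Z`
is relatively weakly open in the closed unit ball. -/
def PropP1 (Z : Type*) [NormedAddCommGroup Z] [NormedSpace ℝ Z] : Prop :=
  ∀ C : Set Z, IsCCS Z C → RelWeaklyOpen Z C

/-- (P2): every finite convex combination of slices of the closed unit ball of `Z`
has nonempty interior in the relative weak topology of the closed unit ball. -/
def PropP2 (Z : Type*) [NormedAddCommGroup Z] [NormedSpace ℝ Z] : Prop :=
  ∀ C : Set Z, IsCCS Z C → ∃ z ∈ C, RelWeakInteriorPt Z C z

/-- (P3): every finite convex combination of slices of the closed unit ball of `Z`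
intersects the unit sphere of `Z`. -/
def PropP3 (Z : Type*) [NormedAddCommGroup Z] [NormedSpace ℝ Z] : Prop :=
  ∀ C : Set Z, IsCCS Z C → ∃ z ∈ C, ‖z‖ = 1

open MeasureTheory ZeroAtInftyContinuousMap
open scoped ZeroAtInfty

/-!
Take `f = ∫ · dν` for the normalised measure `ν = μ / μ(K)` and `C = ½ S(f, ¼) + ½ S(-f, ¼)`.
Every `w ∈ C` is the average of two functions of sup norm `≤ 1` with integrals near `1` and `-1`,
so `∫ |w| dν < ¼`. Suppose a relative weak neighbourhood of `z ∈ C`, cut out by `d` functionals,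
lay inside `C`. As `ν` has no atoms, most of its mass sits on finitely many disjoint compact
sets `Lᵢ` of measure `≤ 1 / (8 (d + 1))`. With bump functions `ψᵢ` for them, the functions
`z + (∑ uᵢ ψᵢ) (1 - |z|)` with `|uᵢ| ≤ 1` stay in the unit ball, and an extreme point `u` of the
polytope on which the `d` functionals do not move `z` has `|uᵢ| = 1` for all but `d` indices.
The resulting `w` lies in the neighbourhood, hence in `C`, yet `|w| ≥ 1 - 2 |z|` on all but
`1 / 4` of the mass, which forces `∫ |w| dν > ¾ - 2 ∫ |z| dν > ¼`.
-/

open Set Filter Topology Function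

theorem card_filter_abs_lt_one_le_finrank_of_mem_extremePoints {ι F : Type*} [Fintype ι]
    [AddCommGroup F] [Module ℝ F] [FiniteDimensional ℝ F] (T : (ι → ℝ) →ₗ[ℝ] F) {u : ι → ℝ}
    (hu : u ∈ extremePoints ℝ {v | T v = 0 ∧ ∀ i, |v i| ≤ 1}) :
    (Finset.univ.filter fun i => |u i| < 1).card ≤ Module.finrank ℝ F := by
  obtain ⟨⟨hTu, hu1⟩, hext⟩ := mem_extremePoints.1 hu
  set s := Finset.univ.filter fun i => |u i| < 1
  by_contra! hcard
  let E := Function.ExtendByZero.linearMap ℝ (Subtype.val : s → ι)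
  -- More free coordinates than constraints: some direction supported on them lies in `ker T`.
  obtain ⟨c, hc, hc0⟩ : ∃ c, c ∈ LinearMap.ker (T ∘ₗ E) ∧ c ≠ 0 := by
    refine (Submodule.ne_bot_iff _).1 fun hker => ?_
    have := LinearMap.finrank_le_finrank_of_injective (LinearMap.ker_eq_bot.1 hker)
    rw [Module.finrank_fintype_fun_eq_card, Fintype.card_coe] at this
    omega
  set v := E c
  have hTv : T v = 0 := hc
  have hv_out : ∀ i ∉ s, v i = 0 := fun i hi =>
    Function.extend_apply' _ _ _ fun ⟨j, hj⟩ => hi (hj ▸ j.2)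
  have hv0 : v ≠ 0 := fun hv => hc0 <| funext fun j => by
    simpa [v, E, Subtype.val_injective.extend_apply] using congrFun hv j
  have hnear : ∀ᶠ t in 𝓝 (0 : ℝ), ∀ i, |u i + t * v i| ≤ 1 := by
    refine eventually_all.2 fun i => ?_
    by_cases hi : i ∈ s
    · have hlt : |u i + 0 * v i| < 1 := by simpa [s] using hi
      exact ((continuous_const.add (continuous_id.mul continuous_const)).abs.tendsto 0
        |>.eventually (gt_mem_nhds hlt)).mono fun _ h => h.le
    · exact Eventually.of_forall fun t => by simpa [hv_out i hi] using hu1 i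
  obtain ⟨t, ⟨htp, htn⟩, ht0⟩ := ((hnear.and (continuous_neg.tendsto' 0 0 neg_zero
    |>.eventually hnear)).filter_mono nhdsWithin_le_nhds |>.and self_mem_nhdsWithin).exists
      (f := 𝓝[>] (0 : ℝ))
  have hmem : ∀ r : ℝ, (∀ i, |u i + r * v i| ≤ 1) → u + r • v ∈ {v | T v = 0 ∧ ∀ i, |v i| ≤ 1} :=
    fun r hr => ⟨by simp [hTu, hTv], by simpa using hr⟩
  have hseg : u ∈ openSegment ℝ (u + (-t) • v) (u + t • v) :=
    ⟨2⁻¹, 2⁻¹, by norm_num, by norm_num, by norm_num, by ext; simp; ring⟩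
  have := (hext _ (hmem _ htn) _ (hmem _ htp) hseg).2
  exact hv0 (by simpa [ht0.ne'] using this)

theorem exists_mem_ker_card_filter_abs_lt_one_le_finrank {ι F : Type*} [Fintype ι]
    [AddCommGroup F] [Module ℝ F] [FiniteDimensional ℝ F] (T : (ι → ℝ) →ₗ[ℝ] F) :
    ∃ u : ι → ℝ, T u = 0 ∧ (∀ i, |u i| ≤ 1) ∧
      (Finset.univ.filter fun i => |u i| < 1).card ≤ Module.finrank ℝ F := by
  have hcube : {v : ι → ℝ | ∀ i, |v i| ≤ 1} = Metric.closedBall 0 1 := by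
    ext v; simp [pi_norm_le_iff_of_nonneg]
  have hcompact : IsCompact {v | T v = 0 ∧ ∀ i, |v i| ≤ 1} := by
    rw [ofPred_and, hcube]
    exact (isCompact_closedBall 0 1).inter_left (LinearMap.ker T).closed_of_finiteDimensional
  obtain ⟨u, hu⟩ := hcompact.extremePoints_nonempty ⟨0, by simp⟩
  exact ⟨u, hu.1.1, hu.1.2, card_filter_abs_lt_one_le_finrank_of_mem_extremePoints T hu⟩

theorem sum_max_sub_sum_erase_le_one {ι : Type*} [Fintype ι] [DecidableEq ι] {a : ι → ℝ}
    (h0 : ∀ i, 0 ≤ a i) (h1 : ∀ i, a i ≤ 1) :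
    ∑ i, max (a i - ∑ j ∈ Finset.univ.erase i, a j) 0 ≤ 1 := by
  cases isEmpty_or_nonempty ι
  · simp
  -- Only the index where `a` is largest can contribute.
  obtain ⟨m, hm⟩ := Finite.exists_max a
  rw [Fintype.sum_eq_single m fun i hi => max_eq_right <| by
    linarith [Finset.single_le_sum (fun j _ => h0 j) (Finset.mem_erase.2 ⟨Ne.symm hi,
      Finset.mem_univ m⟩), hm i]]
  exact max_le (by linarith [Finset.sum_nonneg fun j (_ : j ∈ Finset.univ.erase m) => h0 j, h1 m])
    zero_le_one

theorem exists_bump_family {X ι : Type*} [TopologicalSpace X] [T2Space X]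
    [LocallyCompactSpace X] [Fintype ι] {L : ι → Set X} (hL : ∀ i, IsCompact (L i))
    (hdisj : Pairwise (Disjoint on L)) :
    ∃ ψ : ι → C(X, ℝ), (∀ i, HasCompactSupport (ψ i)) ∧ (∀ i x, 0 ≤ ψ i x) ∧
      (∀ x, ∑ i, ψ i x ≤ 1) ∧ (∀ i, EqOn (ψ i) 1 (L i)) ∧
      ∀ i j, i ≠ j → EqOn (ψ j) 0 (L i) := by
  classical
  choose φ hφ1 hφ0 hφc hφI using fun i => exists_continuous_one_zero_of_isCompact (hL i)
    (isClosed_biUnion_finset fun j (_ : j ∈ Finset.univ.erase i) => (hL j).isClosed)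
    (disjoint_iUnion₂_right.2 fun j hj => hdisj (Finset.ne_of_mem_erase hj).symm)
  have hφ0' : ∀ i j, i ≠ j → ∀ x ∈ L i, φ j x = 0 := fun i j hij x hx =>
    hφ0 j (mem_biUnion (Finset.mem_erase.2 ⟨hij, Finset.mem_univ i⟩) hx)
  have hsum0 : ∀ i x, 0 ≤ ∑ j ∈ Finset.univ.erase i, φ j x := fun i x =>
    Finset.sum_nonneg fun j _ => (hφI j x).1
  refine ⟨fun i => ⟨fun x => max (φ i x - ∑ j ∈ Finset.univ.erase i, φ j x) 0, by fun_prop⟩,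
    fun i => (hφc i).mono fun x hx => ?_, fun i x => le_max_right _ _,
    fun x => sum_max_sub_sum_erase_le_one (fun i => (hφI i x).1) fun i => (hφI i x).2,
    fun i x hx => ?_, fun i j hij x hx => ?_⟩
  · rw [mem_support] at hx ⊢
    contrapose! hx
    simp only [ContinuousMap.coe_mk, hx]
    exact max_eq_right (by linarith [hsum0 i x])
  · simp only [ContinuousMap.coe_mk, hφ1 i hx, Pi.one_apply,
      Finset.sum_eq_zero fun j hj => hφ0' i j (Finset.ne_of_mem_erase hj).symm x hx]
    norm_num
  · simp only [ContinuousMap.coe_mk, hφ0' i j hij x hx, Pi.zero_apply]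
    exact max_eq_right (by linarith [hsum0 j x])

namespace ZeroAtInftyContinuousMap

variable {X : Type*} [TopologicalSpace X]

theorem finset_sum_apply {ι : Type*} (s : Finset ι) (g : ι → C₀(X, ℝ)) (x : X) :
    (∑ i ∈ s, g i) x = ∑ i ∈ s, g i x :=
  map_sum (AddMonoidHom.mk' (fun h : C₀(X, ℝ) => h x) fun _ _ => rfl) g s

theorem norm_le_iff {f : C₀(X, ℝ)} {C : ℝ} (hC : 0 ≤ C) : ‖f‖ ≤ C ↔ ∀ x, |f x| ≤ C := by
  rw [← norm_toBCF_eq_norm, BoundedContinuousFunction.norm_le hC]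
  rfl

section Integral

variable {K : Type*} [TopologicalSpace K] [MeasurableSpace K] [OpensMeasurableSpace K]

theorem integrable (μ : Measure K) [IsFiniteMeasure μ] (g : C₀(K, ℝ)) : Integrable g μ :=
  g.toBCF.integrable μ

def integralCLM (μ : Measure K) [IsFiniteMeasure μ] : StrongDual ℝ C₀(K, ℝ) :=
  LinearMap.mkContinuous
    { toFun := fun g => ∫ x, g x ∂μ
      map_add' := fun g h => integral_add (g.integrable μ) (h.integrable μ)
      map_smul' := fun c g => integral_const_mul c _ }
    (μ.real univ) fun g => (g.toBCF.norm_integral_le_mul_norm μ).trans_eq <| by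
      rw [norm_toBCF_eq_norm]

theorem integralCLM_apply (μ : Measure K) [IsFiniteMeasure μ] (g : C₀(K, ℝ)) :
    integralCLM μ g = ∫ x, g x ∂μ := rfl

theorem norm_integralCLM [LocallyCompactSpace K] [T2Space K] (μ : Measure K) [IsFiniteMeasure μ]
    [μ.Regular] : ‖integralCLM μ‖ = μ.real univ := by
  refine le_antisymm (LinearMap.mkContinuous_norm_le _ measureReal_nonneg _)
    (le_of_forall_lt fun r hr => ?_)
  rcases lt_or_ge r 0 with hr0 | hr0
  · exact hr0.trans_le (integralCLM μ).opNorm_nonneg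
  obtain ⟨Q, -, hQ, hrQ⟩ := MeasurableSet.univ.exists_lt_isCompact_of_ne_top (μ := μ)
    (measure_ne_top μ univ) ((ENNReal.ofReal_lt_iff_lt_toReal hr0 (measure_ne_top μ univ)).2 hr)
  obtain ⟨φ, hφQ, -, hφc, hφI⟩ := exists_continuous_one_zero_of_isCompact hQ isClosed_empty
    (disjoint_empty Q)
  let g : C₀(K, ℝ) := ⟨φ, hφc.is_zero_at_infty⟩
  have hgφ : ∀ x, g x = φ x := fun _ => rfl
  have hg : ‖g‖ ≤ 1 := (norm_le_iff zero_le_one).2 fun x => abs_le.2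
    ⟨by linarith [(hφI x).1, hgφ x], (hgφ x).trans_le (hφI x).2⟩
  calc r < μ.real Q := (ENNReal.ofReal_lt_iff_lt_toReal hr0 (measure_ne_top μ Q)).1 hrQ
    _ = ∫ x, Q.indicator 1 x ∂μ := (integral_indicator_one hQ.measurableSet).symm
    _ ≤ integralCLM μ g := integral_mono ((integrable_const 1).indicator hQ.measurableSet)
        (g.integrable μ) fun x => by
          by_cases hx : x ∈ Q
          · simp [hx, hgφ, hφQ hx]
          · simp [hx, hgφ, (hφI x).1]
    _ ≤ ‖integralCLM μ‖ := (le_abs_self _).trans ((integralCLM μ).le_of_opNorm_le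
        (le_refl _) g |>.trans (mul_le_of_le_one_right (norm_nonneg _) hg))

end Integral

end ZeroAtInftyContinuousMap

theorem exists_norm_le_one_eq_on_finset_one_sub_two_mul_abs_le {K ι : Type*}
    [TopologicalSpace K] [T2Space K] [LocallyCompactSpace K] [Fintype ι] {z : C₀(K, ℝ)}
    (hz : ‖z‖ ≤ 1) (Fs : Finset (StrongDual ℝ C₀(K, ℝ))) {L : ι → Set K}
    (hL : ∀ i, IsCompact (L i)) (hdisj : Pairwise (Disjoint on L)) :
    ∃ w : C₀(K, ℝ), ‖w‖ ≤ 1 ∧ (∀ f ∈ Fs, f w = f z) ∧ ∃ s : Finset ι, s.card ≤ Fs.card ∧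
      ∀ i ∉ s, ∀ x ∈ L i, 1 - 2 * |z x| ≤ |w x| := by
  obtain ⟨ψ, hψc, hψ0, hψsum, hψ1, hψ0'⟩ := exists_bump_family hL hdisj
  have hz1 := (ZeroAtInftyContinuousMap.norm_le_iff zero_le_one).1 hz
  let g : ι → C₀(K, ℝ) := fun i => ⟨⟨fun x => ψ i x * (1 - |z x|), by fun_prop⟩,
    (hψc i).mul_right.is_zero_at_infty⟩
  let T : (ι → ℝ) →ₗ[ℝ] (Fs → ℝ) := LinearMap.pi fun f =>
    (f.1 : C₀(K, ℝ) →L[ℝ] ℝ).toLinearMap ∘ₗ Fintype.linearCombination ℝ g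
  obtain ⟨u, hTu, hu1, hucard⟩ := exists_mem_ker_card_filter_abs_lt_one_le_finrank T
  rw [Module.finrank_fintype_fun_eq_card, Fintype.card_coe] at hucard
  set w := z + ∑ i, u i • g i
  have hw : ∀ x, w x = z x + (∑ i, u i * ψ i x) * (1 - |z x|) := fun x => by
    simp [w, g, ZeroAtInftyContinuousMap.finset_sum_apply, Finset.sum_mul, mul_assoc]
  have hsum1 : ∀ x, |∑ i, u i * ψ i x| ≤ 1 := fun x => calc
    |∑ i, u i * ψ i x| ≤ ∑ i, |u i| * ψ i x :=
      (Finset.abs_sum_le_sum_abs _ _).trans_eq (by simp [abs_mul, abs_of_nonneg (hψ0 _ x)])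
    _ ≤ ∑ i, ψ i x := Finset.sum_le_sum fun i _ => mul_le_of_le_one_left (hψ0 i x) (hu1 i)
    _ ≤ 1 := hψsum x
  refine ⟨w, (ZeroAtInftyContinuousMap.norm_le_iff zero_le_one).2 fun x => ?_, fun f hf => ?_,
    Finset.univ.filter fun i => |u i| < 1, hucard, fun i hi x hx => ?_⟩
  · rw [hw]
    have := mul_le_mul_of_nonneg_right (hsum1 x) (sub_nonneg.2 (hz1 x))
    calc |z x + (∑ i, u i * ψ i x) * (1 - |z x|)|
        ≤ |z x| + |∑ i, u i * ψ i x| * (1 - |z x|) :=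
          (abs_add_le _ _).trans_eq (by rw [abs_mul, abs_of_nonneg (sub_nonneg.2 (hz1 x))])
      _ ≤ 1 := by linarith
  · have := congrFun hTu ⟨f, hf⟩
    simp only [T, LinearMap.pi_apply, LinearMap.comp_apply, Fintype.linearCombination_apply,
      ContinuousLinearMap.coe_coe, Pi.zero_apply] at this
    simp [w, this]
  · have hui : |u i| = 1 := le_antisymm (hu1 i) (by simpa using hi)
    have hcollapse : ∑ j, u j * ψ j x = u i := by
      rw [Fintype.sum_eq_single i fun j hj => by simp [hψ0' i j (Ne.symm hj) hx], hψ1 i hx,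
        Pi.one_apply, mul_one]
    have := abs_sub_abs_le_abs_sub (u i * (1 - |z x|)) (-z x)
    rw [hw, hcollapse]
    rw [abs_mul, hui, abs_of_nonneg (sub_nonneg.2 (hz1 x)), abs_neg] at this
    rw [show u i * (1 - |z x|) - -z x = z x + u i * (1 - |z x|) by ring] at this
    linarith

namespace MeasureTheory

open scoped ENNReal

variable {K : Type*} [MeasurableSpace K] {μ : Measure K}

theorem nullSingletonClass_of_forall_exists_measure_lt [MeasurableSingletonClass K]
    (h : ∀ E : Set K, MeasurableSet E → 0 < μ E → ∃ F ⊆ E, MeasurableSet F ∧ 0 < μ F ∧ μ F < μ E) :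
    NullSingletonClass μ := by
  refine ⟨fun x => by_contra fun hx => ?_⟩
  obtain ⟨F, hF, -, hF0, hFx⟩ := h {x} (measurableSet_singleton x) (pos_iff_ne_zero.2 hx)
  rcases subset_singleton_iff_eq.1 hF with rfl | rfl
  · simp at hF0
  · exact hFx.false

variable [IsFiniteMeasure μ]

theorem measureReal_iUnion_le_biUnion_notMem_add {ι : Type*}
    {L : ι → Set K} (s : Finset ι) {η : ℝ} (hη : ∀ i, μ.real (L i) ≤ η) :
    μ.real (⋃ i, L i) ≤ μ.real (⋃ i ∉ s, L i) + s.card * η := calc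
  μ.real (⋃ i, L i) ≤ μ.real ((⋃ i ∉ s, L i) ∪ ⋃ i ∈ s, L i) := measureReal_mono fun x hx => by
    obtain ⟨i, hi⟩ := mem_iUnion.1 hx
    by_cases his : i ∈ s
    · exact Or.inr (mem_biUnion his hi)
    · exact Or.inl (mem_biUnion his hi)
  _ ≤ μ.real (⋃ i ∉ s, L i) + ∑ i ∈ s, μ.real (L i) :=
    (measureReal_union_le _ _).trans (by gcongr; exact measureReal_biUnion_finset_le s L)
  _ ≤ μ.real (⋃ i ∉ s, L i) + s.card * η := by
    gcongr; exact (Finset.sum_le_card_nsmul _ _ _ fun i _ => hη i).trans_eq (nsmul_eq_mul _ _)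

theorem measureReal_sub_two_mul_integral_le_integral {f g : K → ℝ} {U : Set K}
    (hU : MeasurableSet U) (hf : Integrable f μ) (hg : Integrable g μ) (hf0 : 0 ≤ f)
    (hg0 : 0 ≤ g) (hfg : ∀ x ∈ U, 1 - 2 * g x ≤ f x) :
    μ.real U - 2 * ∫ x, g x ∂μ ≤ ∫ x, f x ∂μ := by
  calc μ.real U - 2 * ∫ x, g x ∂μ ≤ μ.real U - 2 * ∫ x in U, g x ∂μ := by
        linarith [setIntegral_le_integral (s := U) hg (Eventually.of_forall hg0)]
    _ = ∫ x in U, (1 - 2 * g x) ∂μ := by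
        rw [integral_sub (integrable_const 1) (hg.integrableOn.const_mul 2), integral_const_mul]
        simp [measureReal_def]
    _ ≤ ∫ x in U, f x ∂μ := setIntegral_mono_on
        ((integrable_const 1).sub (hg.integrableOn.const_mul 2)) hf.integrableOn hU hfg
    _ ≤ ∫ x, f x ∂μ := setIntegral_le_integral hf (Eventually.of_forall hf0)

variable [TopologicalSpace K] [T2Space K] [OpensMeasurableSpace K] [NullSingletonClass μ]
  [μ.Regular]

theorem exists_pairwise_disjoint_isCompact_measure_le {ε η : ℝ≥0∞} (hε : ε ≠ 0) (hη : η ≠ 0) :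
    ∃ (n : ℕ) (L : Fin n → Set K), (∀ i, IsCompact (L i)) ∧ Pairwise (Disjoint on L) ∧
      (∀ i, μ (L i) ≤ η) ∧ μ univ ≤ μ (⋃ i, L i) + ε := by
  obtain ⟨Q, -, hQ, hμQ⟩ := MeasurableSet.univ.exists_isCompact_lt_add (μ := μ)
    (measure_ne_top μ univ) (ENNReal.half_pos hε).ne'
  -- Points have measure zero, so outer regularity covers `Q` by finitely many `η`-small open sets.
  choose U hxU hUo hUη using fun x : K => ({x} : Set K).exists_isOpen_lt_of_lt (μ := μ) η (by
    simpa [pos_iff_ne_zero] using hη)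
  obtain ⟨t, htQ⟩ := hQ.elim_finite_subcover U hUo fun x _ => mem_iUnion.2 ⟨x, hxU x rfl⟩
  set n := t.card
  let S : Fin n → Set K := disjointed fun i => Q ∩ U (t.equivFin.symm i)
  have hSm : ∀ i, MeasurableSet (S i) := fun i =>
    disjointedRec (fun _ _ ht => ht.diff (hQ.measurableSet.inter (hUo _).measurableSet))
      (hQ.measurableSet.inter (hUo _).measurableSet)
  have hSQ : (⋃ i, S i) = Q := by
    rw [iUnion_disjointed, ← inter_iUnion, inter_eq_left]
    refine htQ.trans (iUnion₂_subset fun x hx => ?_)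
    exact subset_iUnion_of_subset (t.equivFin ⟨x, hx⟩) (by simp)
  choose L hLS hLc hSL using fun i => (hSm i).exists_isCompact_lt_add (measure_ne_top μ (S i))
    (ENNReal.div_pos (ENNReal.half_pos hε).ne' (ENNReal.natCast_ne_top n)).ne'
  have hLdisj : Pairwise (Disjoint on L) := fun i j hij =>
    ((disjoint_disjointed _) hij).mono (hLS i) (hLS j)
  refine ⟨n, L, hLc, hLdisj, fun i => ?_, ?_⟩
  · exact (measure_mono ((hLS i).trans ((disjointed_subset _ i).trans inter_subset_right))).trans
      (hUη _).le
  calc μ univ ≤ μ Q + ε / 2 := hμQ.le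
    _ = ∑ i, μ (S i) + ε / 2 := by
      rw [← hSQ, measure_iUnion (disjoint_disjointed _) hSm, tsum_fintype]
    _ ≤ ∑ i, (μ (L i) + ε / 2 / n) + ε / 2 := by gcongr with i; exact (hSL i).le
    _ ≤ μ (⋃ i, L i) + ε / 2 + ε / 2 := by
      rw [Finset.sum_add_distrib, Finset.sum_const, Finset.card_univ, Fintype.card_fin,
        nsmul_eq_mul, measure_iUnion hLdisj fun i => (hLc i).measurableSet, tsum_fintype]
      gcongr
      exact ENNReal.mul_div_le
    _ = μ (⋃ i, L i) + ε := by rw [add_assoc, ENNReal.add_halves]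

theorem exists_pairwise_disjoint_isCompact_measureReal_le {ε η : ℝ} (hε : 0 < ε) (hη : 0 < η) :
    ∃ (n : ℕ) (L : Fin n → Set K), (∀ i, IsCompact (L i)) ∧ Pairwise (Disjoint on L) ∧
      (∀ i, μ.real (L i) ≤ η) ∧ μ.real univ ≤ μ.real (⋃ i, L i) + ε := by
  obtain ⟨n, L, hLc, hLd, hLη, hLμ⟩ := exists_pairwise_disjoint_isCompact_measure_le (μ := μ)
    (ENNReal.ofReal_pos.2 hε).ne' (ENNReal.ofReal_pos.2 hη).ne'
  refine ⟨n, L, hLc, hLd, fun i => ENNReal.toReal_le_of_le_ofReal hη.le (hLη i), ?_⟩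
  have := ENNReal.toReal_mono (by finiteness) hLμ
  rwa [ENNReal.toReal_add (measure_ne_top _ _) ENNReal.ofReal_ne_top,
    ENNReal.toReal_ofReal hε.le] at this

end MeasureTheory

theorem norm_le_one_and_integral_abs_lt_of_mem_half_add_half_ballSlice {K : Type*}
    [TopologicalSpace K] [MeasurableSpace K] [OpensMeasurableSpace K] {μ : Measure K}
    [IsProbabilityMeasure μ] {α : ℝ} {w : C₀(K, ℝ)}
    (hw : w ∈ (2⁻¹ : ℝ) • ballSlice C₀(K, ℝ) (integralCLM μ) α +
      (2⁻¹ : ℝ) • ballSlice C₀(K, ℝ) (-integralCLM μ) α) :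
    ‖w‖ ≤ 1 ∧ ∫ x, |w x| ∂μ < α := by
  obtain ⟨_, ⟨g₁, ⟨hg₁, hs₁⟩, rfl⟩, _, ⟨g₂, ⟨hg₂, hs₂⟩, rfl⟩, rfl⟩ := hw
  refine ⟨mem_closedBall_zero_iff.1 <| convex_closedBall (0 : C₀(K, ℝ)) 1 hg₁ hg₂
    (by norm_num) (by norm_num) (by norm_num), ?_⟩
  beta_reduce
  rw [mem_closedBall_zero_iff, ZeroAtInftyContinuousMap.norm_le_iff zero_le_one] at hg₁ hg₂
  rw [integralCLM_apply] at hs₁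
  rw [_root_.neg_apply, integralCLM_apply] at hs₂
  set w := (2⁻¹ : ℝ) • g₁ + (2⁻¹ : ℝ) • g₂
  have hpt : ∀ x, g₁ x - g₂ x ≤ 2 - 2 * |w x| := fun x => by
    simp only [w, coe_add, coe_smul, Pi.add_apply, Pi.smul_apply, smul_eq_mul]
    cases abs_le.1 (hg₁ x); cases abs_le.1 (hg₂ x)
    cases abs_cases (2⁻¹ * g₁ x + 2⁻¹ * g₂ x) <;> linarith
  have hint : ∫ x, (g₁ x - g₂ x) ∂μ ≤ ∫ x, (2 - 2 * |w x|) ∂μ :=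
    integral_mono ((g₁.integrable μ).sub (g₂.integrable μ))
      ((integrable_const 2).sub ((w.integrable μ).abs.const_mul 2)) hpt
  rw [integral_sub (g₁.integrable μ) (g₂.integrable μ), integral_sub (integrable_const 2)
    ((w.integrable μ).abs.const_mul 2), integral_const, integral_const_mul, smul_eq_mul,
    probReal_univ] at hint
  linarith

/-- If the locally compact Hausdorff space `K` carries a nonzero
atomless regular finite Borel measure, then the closed unit ball of `C₀(K)` admits a
half-sum of two slices whose interior in the relative weak topology of the closed
unit ball is empty. -/
theorem exists_half_sum_slices_empty_relWeak_interior_C0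
    {K : Type*} [TopologicalSpace K] [LocallyCompactSpace K] [T2Space K]
    [MeasurableSpace K] [BorelSpace K]
    (μ : Measure K) (hμ0 : μ ≠ 0) [IsFiniteMeasure μ] [μ.Regular]
    (hatomless : ∀ E : Set K, MeasurableSet E → 0 < μ E →
      ∃ F ⊆ E, MeasurableSet F ∧ 0 < μ F ∧ μ F < μ E) :
    ∃ (f₁ f₂ : StrongDual ℝ C₀(K, ℝ)) (α₁ α₂ : ℝ),
      ‖f₁‖ = 1 ∧ ‖f₂‖ = 1 ∧ 0 < α₁ ∧ 0 < α₂ ∧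
      ¬ ∃ z ∈ (2⁻¹ : ℝ) • ballSlice C₀(K, ℝ) f₁ α₁ +
            (2⁻¹ : ℝ) • ballSlice C₀(K, ℝ) f₂ α₂,
          RelWeakInteriorPt C₀(K, ℝ)
            ((2⁻¹ : ℝ) • ballSlice C₀(K, ℝ) f₁ α₁ +
              (2⁻¹ : ℝ) • ballSlice C₀(K, ℝ) f₂ α₂) z := by
  have : NeZero μ := ⟨hμ0⟩
  have : NullSingletonClass μ := nullSingletonClass_of_forall_exists_measure_lt hatomless
  set ν := (μ univ)⁻¹ • μ
  have : NullSingletonClass ν := ⟨fun x => by simp [ν]⟩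
  have : ν.Regular := .smul (ENNReal.inv_ne_top.2 (Measure.measure_univ_ne_zero.2 hμ0))
  have hf : ‖integralCLM ν‖ = 1 := by rw [norm_integralCLM, probReal_univ]
  refine ⟨integralCLM ν, -integralCLM ν, 4⁻¹, 4⁻¹, hf, by rwa [ContinuousLinearMap.opNorm_neg],
    by norm_num, by norm_num, ?_⟩
  rintro ⟨z, hzC, Fs, δ, hδ, hsub⟩
  obtain ⟨hz1, hz⟩ := norm_le_one_and_integral_abs_lt_of_mem_half_add_half_ballSlice hzC
  obtain ⟨n, L, hLc, hLd, hLη, hLν⟩ := exists_pairwise_disjoint_isCompact_measureReal_le (μ := ν)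
    (by norm_num : (0 : ℝ) < 8⁻¹) (by positivity : (0 : ℝ) < (8 * ((Fs.card : ℝ) + 1))⁻¹)
  obtain ⟨w, hw1, hwz, s, hs, hws⟩ :=
    exists_norm_le_one_eq_on_finset_one_sub_two_mul_abs_le hz1 Fs hLc hLd
  obtain ⟨-, hw⟩ := norm_le_one_and_integral_abs_lt_of_mem_half_add_half_ballSlice
    (hsub ⟨mem_closedBall_zero_iff.2 hw1, fun f hf => by simpa [hwz f hf] using hδ⟩)
  have hfree : (s.card : ℝ) * (8 * ((Fs.card : ℝ) + 1))⁻¹ ≤ 8⁻¹ := by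
    rw [mul_inv_le_iff₀ (by positivity)]
    linarith [show (s.card : ℝ) ≤ Fs.card by exact_mod_cast hs]
  have hlow := measureReal_sub_two_mul_integral_le_integral (μ := ν) (U := ⋃ i ∉ s, L i)
    (MeasurableSet.iUnion fun i => MeasurableSet.iUnion fun _ => (hLc i).measurableSet)
    (integrable ν w).abs (integrable ν z).abs (fun x => abs_nonneg _) (fun x => abs_nonneg _)
    (by simp only [mem_iUnion]; exact fun x ⟨i, hi, hx⟩ => hws i hi x hx)
  linarith [measureReal_iUnion_le_biUnion_notMem_add (μ := ν) s hLη, probReal_univ (μ := ν)]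
end
end

section
/- Let K be an infinite locally compact Hausdorff space. Then every finite convex combination of slices of the closed unit ball of C₀(K) intersects the unit sphere of C₀(K). -/
open scoped Pointwise

noncomputable section

open ZeroAtInftyContinuousMap
open scoped ZeroAtInfty

/-!
Pick `gᵢ` in the `i`-th slice. An infinite Hausdorff space contains infinitely many pairwise
disjoint nonempty open sets, and Urysohn's lemma puts in each a bump `φₖ` with values in `[0, 1]`
and `φₖ xₖ = 1`. A bounded sequence of disjointly supported functions is weakly null, so for all
but finitely many `k` every `(1 - φₖ) gᵢ + φₖ`, which stays in the unit ball, lies in the `i`-th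
slice. These functions all equal `1` at `xₖ`, hence so does their convex combination, which
therefore has norm one.
-/

open Filter Function Set Topology

theorem ballSlice_nonempty {Z : Type*} [NormedAddCommGroup Z] [NormedSpace ℝ Z]
    {f : StrongDual ℝ Z} {α : ℝ} (h : 1 - α < ‖f‖) : (ballSlice Z f α).Nonempty := by
  obtain ⟨z, hz, hfz⟩ := f.exists_lt_apply_of_lt_opNorm h
  rw [Real.norm_eq_abs] at hfz
  rcases le_or_gt 0 (f z) with hpos | hneg
  · exact ⟨z, mem_closedBall_zero_iff.2 hz.le, by rwa [abs_of_nonneg hpos] at hfz⟩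
  · refine ⟨-z, mem_closedBall_zero_iff.2 (by rw [norm_neg]; exact hz.le), ?_⟩
    rwa [abs_of_neg hneg, ← map_neg] at hfz

namespace ZeroAtInftyContinuousMap

variable {K : Type*} [TopologicalSpace K]

section Norm

variable {β : Type*} [NormedAddCommGroup β]

theorem norm_coe_le_norm (u : C₀(K, β)) (z : K) : ‖u z‖ ≤ ‖u‖ :=
  norm_toBCF_eq_norm (f := u) ▸ u.toBCF.norm_coe_le_norm z

theorem norm_le {u : C₀(K, β)} {c : ℝ} (hc : 0 ≤ c) : ‖u‖ ≤ c ↔ ∀ z, ‖u z‖ ≤ c := by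
  rw [← norm_toBCF_eq_norm]
  exact BoundedContinuousFunction.norm_le hc

theorem sum_apply {ι : Type*} (s : Finset ι) (u : ι → C₀(K, β)) (z : K) :
    (∑ i ∈ s, u i) z = ∑ i ∈ s, u i z :=
  map_sum (⟨⟨fun v => v z, rfl⟩, fun _ _ => rfl⟩ : C₀(K, β) →+ β) u s

theorem norm_sum_le_of_pairwiseDisjoint_support {ι : Type*} (s : Finset ι) {u : ι → C₀(K, β)}
    (hu : (s : Set ι).PairwiseDisjoint fun i => support (u i)) {c : ℝ} (hc0 : 0 ≤ c)
    (hc : ∀ i ∈ s, ‖u i‖ ≤ c) : ‖∑ i ∈ s, u i‖ ≤ c := by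
  refine (norm_le hc0).2 fun z => ?_
  rw [sum_apply]
  by_cases hz : ∃ i ∈ s, u i z ≠ 0
  · obtain ⟨i, hi, hiz⟩ := hz
    rw [Finset.sum_eq_single_of_mem i hi fun j hj hji => ?_]
    · exact (norm_coe_le_norm _ z).trans (hc i hi)
    · by_contra hjz
      exact disjoint_left.1 (hu hj hi hji) hjz hiz
  · push Not at hz
    rw [Finset.sum_eq_zero hz, norm_zero]
    exact hc0

end Norm

/-- For a finite `s`, `∑ i ∈ s, sign (f (u i)) • u i` lies in the ball of radius `c`, which
bounds `∑ i ∈ s, |f (u i)|`. -/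
theorem tendsto_cofinite_apply_of_pairwise_disjoint_support {ι : Type*}
    (f : StrongDual ℝ C₀(K, ℝ)) {u : ι → C₀(K, ℝ)}
    (hu : Pairwise (Disjoint on fun i => support (u i))) {c : ℝ} (hc : ∀ i, ‖u i‖ ≤ c) :
    Tendsto (fun i => f (u i)) cofinite (𝓝 0) := by
  suffices Summable fun i => |f (u i)| from this.of_abs.tendsto_cofinite_zero
  refine summable_of_sum_le (c := ‖f‖ * max c 0) (fun i => abs_nonneg _) fun s => ?_
  have hsigned : ‖∑ i ∈ s, (SignType.sign (f (u i)) : ℝ) • u i‖ ≤ max c 0 := by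
    refine norm_sum_le_of_pairwiseDisjoint_support s (fun i _ j _ hij => ?_)
      (le_max_right _ _) fun i _ => ?_
    · exact (hu hij).mono (support_const_smul_subset _ _) (support_const_smul_subset _ _)
    · have hsign : ‖(SignType.sign (f (u i)) : ℝ)‖ ≤ 1 := by
        cases SignType.sign (f (u i)) <;> simp
      calc ‖(SignType.sign (f (u i)) : ℝ) • u i‖ ≤ 1 * ‖u i‖ := by
            rw [norm_smul]; gcongr
        _ ≤ max c 0 := by rw [one_mul]; exact (hc i).trans (le_max_left _ _)
  calc ∑ i ∈ s, |f (u i)| = f (∑ i ∈ s, (SignType.sign (f (u i)) : ℝ) • u i) := by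
        simp only [map_sum, map_smul, smul_eq_mul, sign_mul_self]
    _ ≤ ‖f‖ * max c 0 := (le_abs_self _).trans ((f.le_opNorm _).trans (by gcongr))

theorem exists_bump [RegularSpace K] [LocallyCompactSpace K] {U : Set K} (hU : IsOpen U)
    {x : K} (hx : x ∈ U) :
    ∃ φ : C₀(K, ℝ), φ x = 1 ∧ (∀ z, φ z ∈ Icc (0 : ℝ) 1) ∧ support φ ⊆ U := by
  obtain ⟨φ, hφx, hφU, hφc, hφ⟩ := exists_continuous_one_zero_of_isCompact isCompact_singleton
    hU.isClosed_compl (disjoint_singleton_left.2 (not_not_intro hx))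
  exact ⟨⟨φ, hφc.is_zero_at_infty⟩, hφx rfl, hφ, support_subset_iff'.2 fun z hz => hφU hz⟩

/-- The function `(1 - φ) g + φ`, written without the unit that `C₀(K, ℝ)` lacks. -/
def blendOne (φ g : C₀(K, ℝ)) : C₀(K, ℝ) :=
  g + (φ - φ * g)

theorem blendOne_apply (φ g : C₀(K, ℝ)) (z : K) : blendOne φ g z = (1 - φ z) * g z + φ z := by
  simp only [blendOne, add_apply, sub_apply, mul_apply]
  ring

theorem blendOne_apply_of_eq_one {φ : C₀(K, ℝ)} (g : C₀(K, ℝ)) {z : K} (h : φ z = 1) :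
    blendOne φ g z = 1 := by
  rw [blendOne_apply, h]
  ring

theorem norm_blendOne_le {φ g : C₀(K, ℝ)} (hφ : ∀ z, φ z ∈ Icc (0 : ℝ) 1) (hg : ‖g‖ ≤ 1) :
    ‖blendOne φ g‖ ≤ 1 := by
  refine (norm_le zero_le_one).2 fun z => ?_
  obtain ⟨hφ0, hφ1⟩ := hφ z
  obtain ⟨hg0, hg1⟩ := abs_le.1 ((norm_coe_le_norm g z).trans hg)
  rw [blendOne_apply, Real.norm_eq_abs, abs_le]
  constructor <;> nlinarith

theorem eventually_blendOne_mem_ballSlice {ι : Type*} {φ : ι → C₀(K, ℝ)}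
    (hφ : ∀ i z, φ i z ∈ Icc (0 : ℝ) 1) (hφd : Pairwise (Disjoint on fun i => support (φ i)))
    {f : StrongDual ℝ C₀(K, ℝ)} {α : ℝ} {g : C₀(K, ℝ)} (hg : g ∈ ballSlice C₀(K, ℝ) f α) :
    ∀ᶠ i in cofinite, blendOne (φ i) g ∈ ballSlice C₀(K, ℝ) f α := by
  have hg1 : ‖g‖ ≤ 1 := mem_closedBall_zero_iff.1 hg.1
  have hsupp : ∀ i, support ⇑(φ i - φ i * g) ⊆ support (φ i) := fun i =>
    support_subset_iff'.2 fun z hz => by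
      rw [sub_apply, mul_apply, notMem_support.1 hz, zero_mul, sub_zero]
  have hbound : ∀ i, ‖φ i - φ i * g‖ ≤ 2 := fun i => by
    have hφi : ‖φ i‖ ≤ 1 := (norm_le zero_le_one).2 fun z => by
      rw [Real.norm_eq_abs, abs_le]
      exact ⟨by linarith [(hφ i z).1], (hφ i z).2⟩
    calc ‖φ i - φ i * g‖ ≤ ‖φ i‖ + ‖φ i‖ * ‖g‖ :=
          (norm_sub_le _ _).trans (by gcongr; exact norm_mul_le _ _)
      _ ≤ 2 := by nlinarith [norm_nonneg (φ i), norm_nonneg g]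
  have hnull := tendsto_cofinite_apply_of_pairwise_disjoint_support f
    (fun i j hij => (hφd hij).mono (hsupp i) (hsupp j)) hbound
  have hlim : Tendsto (fun i => f (blendOne (φ i) g)) cofinite (𝓝 (f g)) := by
    simpa only [blendOne, map_add, add_zero] using tendsto_const_nhds.add hnull
  filter_upwards [hlim.eventually (lt_mem_nhds hg.2)] with i hi
  exact ⟨mem_closedBall_zero_iff.2 (norm_blendOne_le (hφ i) hg1), hi⟩

theorem norm_sum_smul_eq_one_of_apply_eq_one {ι : Type*} (s : Finset ι) {w : ι → ℝ}
    {h : ι → C₀(K, ℝ)} {x : K} (hw : ∀ i ∈ s, 0 ≤ w i) (hw1 : ∑ i ∈ s, w i = 1)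
    (hh : ∀ i ∈ s, ‖h i‖ ≤ 1) (hx : ∀ i ∈ s, h i x = 1) : ‖∑ i ∈ s, w i • h i‖ = 1 := by
  refine le_antisymm ?_ ?_
  · calc ‖∑ i ∈ s, w i • h i‖ ≤ ∑ i ∈ s, ‖w i • h i‖ := norm_sum_le _ _
      _ ≤ ∑ i ∈ s, w i := Finset.sum_le_sum fun i hi => by
          rw [norm_smul, Real.norm_of_nonneg (hw i hi)]
          exact mul_le_of_le_one_right (hw i hi) (hh i hi)
      _ = 1 := hw1
  · have hval : (∑ i ∈ s, w i • h i) x = 1 := by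
      rw [sum_apply, ← hw1]
      exact Finset.sum_congr rfl fun i hi => by rw [smul_apply, hx i hi, smul_eq_mul, mul_one]
    simpa only [hval, norm_one] using norm_coe_le_norm (∑ i ∈ s, w i • h i) x

end ZeroAtInftyContinuousMap

/-- For an infinite locally compact Hausdorff space `K`, every
finite convex combination of slices of the closed unit ball of `C₀(K)` intersects
the unit sphere of `C₀(K)`. -/
theorem ccs_meets_sphere_C0
    {K : Type*} [TopologicalSpace K] [LocallyCompactSpace K] [T2Space K]
    [Infinite K] :
    PropP3 C₀(K, ℝ) := by
  rintro C ⟨n, f, α, lam, -, hf, hα, hlam, hsum, rfl⟩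
  choose g hg using fun i => ballSlice_nonempty (f := f i) (α := α i) (by linarith [hf i, hα i])
  obtain ⟨U, hU, hUo, hUd⟩ := exists_seq_infinite_isOpen_pairwise_disjoint K
  choose x hx using fun k => (hU k).nonempty
  choose φ hφx hφ hφU using fun k => exists_bump (hUo k) (hx k)
  have hφd : Pairwise (Disjoint on fun k => support (φ k)) := fun k l hkl =>
    (hUd hkl).mono (hφU k) (hφU l)
  obtain ⟨k, hk⟩ :=
    (eventually_all.2 fun i => eventually_blendOne_mem_ballSlice hφ hφd (hg i)).exists
  refine ⟨∑ i, lam i • blendOne (φ k) (g i),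
    (mem_fintype_sum _ _).2 ⟨_, fun i => smul_mem_smul_set (hk i), rfl⟩, ?_⟩
  exact norm_sum_smul_eq_one_of_apply_eq_one _ (fun i _ => hlam i) hsum
    (fun i _ => mem_closedBall_zero_iff.1 (hk i).1) fun i _ => blendOne_apply_of_eq_one _ (hφx k)
end
end
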